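/- arXiv:2002.09808 — 4 statements merged into one kernel-verified Lean document; each statement's English description precedes it below -/
import Mathlib

section
/- Let N ≤ M be positive integers and let T be a positive integer number of rounds. Suppose that in each round t = 1,...,T each of the N players independently (across players and across rounds) chooses an arm uniformly at random from {1,...,M}. For each player n and arm i let V_{n,i} denote the number of rounds in which player n chose arm i and no other player chose arm i. Then P( min_{n,i} V_{n,i} < T/(5M) ) \le N M exp( - T / (18 M^2) ). -/
/-!
For a fixed player `n` and arm `i`, the events "round `t` is a collision-free visit of `n` to `i`"
are independent across rounds, each of probability `p = M⁻¹ (1 - M⁻¹)^(N-1)`. Since `N ≤ M`,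
`p ≥ M⁻¹ (1 - M⁻¹)^(M-1) ≥ M⁻¹ e⁻¹ > (1/5 + 1/6) M⁻¹`, so Hoeffding's inequality with deviation
`1/(6M)` bounds the probability of fewer than `T/(5M)` such visits by `exp(-2T/(6M)²)`.
A union bound over the `NM` pairs finishes the proof.
-/

open MeasureTheory ProbabilityTheory Real Finset

lemma Set.setOf_eq_and_forall_ne_eq_iInter {Ω κ β : Type*} [DecidableEq κ] (b : κ → Ω → β)
    (n : κ) (j : β) :
    {ω | b n ω = j ∧ ∀ m, m ≠ n → b m ω ≠ j}
      = ⋂ m, b m ⁻¹' (if m = n then {j} else {j}ᶜ) := by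
  ext ω
  simp only [Set.mem_ofPred_eq, Set.mem_iInter, Set.mem_preimage]
  constructor
  · rintro ⟨hn, hm⟩ m
    split_ifs with h
    · simpa [h] using hn
    · exact hm m h
  · intro h
    exact ⟨by simpa using h n, fun m hm ↦ by simpa [hm] using h m⟩

lemma exp_neg_one_le_one_sub_inv_pow (M : ℕ) : exp (-1) ≤ (1 - (M : ℝ)⁻¹) ^ (M - 1) := by
  obtain _ | _ | k := M
  · simp
  · simp
  have hk : (1 - ((k + 2 : ℕ) : ℝ)⁻¹) = (1 + ((k + 1 : ℕ) : ℝ)⁻¹)⁻¹ := by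
    push_cast
    field_simp
    ring
  rw [Nat.add_sub_cancel, hk, inv_pow, exp_neg]
  exact inv_anti₀ (by positivity) one_add_inv_pow_le_exp

lemma eleven_div_thirty_mul_inv_le_inv_mul_one_sub_inv_pow {N M : ℕ} (hNM : N ≤ M) :
    11 / 30 * (M : ℝ)⁻¹ ≤ (M : ℝ)⁻¹ * (1 - (M : ℝ)⁻¹) ^ (N - 1) := by
  have hbase : 0 ≤ 1 - (M : ℝ)⁻¹ := sub_nonneg.2 (Nat.cast_inv_le_one M)
  calc 11 / 30 * (M : ℝ)⁻¹ ≤ exp (-1) * (M : ℝ)⁻¹ := by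
        gcongr
        linarith [exp_neg_one_gt_d9]
    _ ≤ (1 - (M : ℝ)⁻¹) ^ (M - 1) * (M : ℝ)⁻¹ := by
        gcongr
        exact exp_neg_one_le_one_sub_inv_pow M
    _ ≤ (M : ℝ)⁻¹ * (1 - (M : ℝ)⁻¹) ^ (N - 1) := by
        rw [mul_comm]
        exact mul_le_mul_of_nonneg_left
          (pow_le_pow_of_le_one hbase (sub_le_self _ (by positivity)) (by omega)) (by positivity)

section

variable {Ω ι κ β : Type*} [MeasurableSpace Ω] {μ : Measure Ω}

lemma measureReal_card_filter_le_le_exp [IsProbabilityMeasure μ] [Fintype ι]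
    {A : ι → Ω → Prop} [∀ i ω, Decidable (A i ω)]
    (hA : ∀ i, MeasurableSet {ω | A i ω}) (hindep : iIndepSet (fun i ↦ {ω | A i ω}) μ)
    {p δ : ℝ} (hp : ∀ i, μ.real {ω | A i ω} = p) (hδ : 0 ≤ δ) :
    μ.real {ω | (#{i | A i ω} : ℝ) ≤ (p - δ) * Fintype.card ι}
      ≤ exp (-2 * δ ^ 2 * Fintype.card ι) := by
  set X : ι → Ω → ℝ := fun i ↦ {ω | A i ω}.indicator fun _ ↦ 1
  have hX i : Measurable (X i) := measurable_const.indicator (hA i)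
  have hsubG i : HasSubgaussianMGF (fun ω ↦ p - X i ω) ((‖(1 : ℝ) - 0‖₊ / 2) ^ 2) μ := by
    have hmean : μ[X i] = p := by
      simp [X, integral_indicator_const (1 : ℝ) (hA i), hp]
    have hbdd : ∀ᵐ ω ∂μ, X i ω ∈ Set.Icc 0 1 := ae_of_all _ fun ω ↦ by
      by_cases h : A i ω <;> simp [X, h]
    refine (hasSubgaussianMGF_of_mem_Icc (hX i).aemeasurable hbdd).neg.congr (ae_of_all _ ?_)
    simp [hmean]
  have hindepY : iIndepFun (fun i ω ↦ p - X i ω) μ :=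
    hindep.iIndepFun_indicator.comp (fun _ x ↦ p - x) fun _ ↦ measurable_const.sub measurable_id
  have hcount ω : (#{i | A i ω} : ℝ) = ∑ i, X i ω := by
    simp [X, Set.indicator_apply, Finset.sum_boole]
  calc μ.real {ω | (#{i | A i ω} : ℝ) ≤ (p - δ) * Fintype.card ι}
      ≤ μ.real {ω | δ * Fintype.card ι ≤ ∑ i, (p - X i ω)} := by
        refine measureReal_mono (fun ω hω ↦ ?_)
        simp only [Set.mem_ofPred_eq, Finset.sum_sub_distrib, hcount] at hω ⊢
        simp only [Finset.sum_const, Finset.card_univ, nsmul_eq_mul]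
        linarith
    _ ≤ exp (-(δ * Fintype.card ι) ^ 2 / (2 * ∑ _i : ι, ((‖(1 : ℝ) - 0‖₊ / 2) ^ 2 : NNReal))) :=
        HasSubgaussianMGF.measure_sum_ge_le_of_iIndepFun hindepY (fun i _ ↦ hsubG i) (by positivity)
    _ = exp (-2 * δ ^ 2 * Fintype.card ι) := by
        congr 1
        simp only [sub_zero, nnnorm_one, one_div, inv_pow, sum_const, card_univ, nsmul_eq_mul,
          NNReal.coe_mul, NNReal.coe_natCast, NNReal.coe_inv, NNReal.coe_pow, NNReal.coe_ofNat]
        field_simp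

section

variable [MeasurableSpace β]

namespace ProbabilityTheory.iIndepFun

lemma measure_biInter_iInter_preimage [Fintype κ] {a : ι × κ → Ω → β}
    (ha : iIndepFun a μ) {S : κ → Set β} (hS : ∀ k, MeasurableSet (S k)) (s : Finset ι) :
    μ (⋂ i ∈ s, ⋂ k, a (i, k) ⁻¹' S k) = ∏ i ∈ s, ∏ k, μ (a (i, k) ⁻¹' S k) := by
  rw [← Finset.prod_product', ← ha.measure_inter_preimage_eq_mul _ fun q _ ↦ hS q.2]
  congr 1
  ext ω
  simp only [Set.mem_iInter, Finset.mem_product, Finset.mem_univ, and_true, Prod.forall]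
  exact ⟨fun h i k hi ↦ h i hi k, fun h i hi k ↦ h i k hi⟩

lemma iIndepSet_iInter_preimage [Fintype κ] {a : ι × κ → Ω → β}
    (ha : iIndepFun a μ) (hmeas : ∀ q, Measurable (a q)) {S : κ → Set β}
    (hS : ∀ k, MeasurableSet (S k)) :
    iIndepSet (fun i ↦ ⋂ k, a (i, k) ⁻¹' S k) μ := by
  rw [iIndepSet_iff_meas_biInter fun i ↦ .iInter fun k ↦ hmeas _ (hS k)]
  intro s
  rw [ha.measure_biInter_iInter_preimage hS]
  refine Finset.prod_congr rfl fun i _ ↦ ?_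
  simpa using (ha.measure_biInter_iInter_preimage hS {i}).symm

end ProbabilityTheory.iIndepFun

lemma measureReal_eq_and_forall_ne [IsProbabilityMeasure μ] [Fintype κ] [DecidableEq κ]
    [MeasurableSingletonClass β] {a : ι × κ → Ω → β} (ha : iIndepFun a μ)
    (hmeas : ∀ q, Measurable (a q)) {r : ℝ} (hunif : ∀ q j, μ.real {ω | a q ω = j} = r)
    (t : ι) (n : κ) (j : β) :
    μ.real {ω | a (t, n) ω = j ∧ ∀ m, m ≠ n → a (t, m) ω ≠ j}
      = r * (1 - r) ^ (Fintype.card κ - 1) := by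
  have hS m : MeasurableSet (if m = n then {j} else ({j}ᶜ : Set β)) := by
    split_ifs <;> simp
  have hprod := ha.measure_biInter_iInter_preimage hS {t}
  simp only [Finset.mem_singleton, Set.iInter_iInter_eq_left, Finset.prod_singleton] at hprod
  rw [Set.setOf_eq_and_forall_ne_eq_iInter (fun m ↦ a (t, m)), measureReal_def, hprod,
    ENNReal.toReal_prod, ← Finset.mul_prod_erase _ _ (Finset.mem_univ n)]
  have hcompl m : (μ (a (t, m) ⁻¹' {j}ᶜ)).toReal = 1 - r := by
    rw [Set.preimage_compl, ← measureReal_def, measureReal_compl (hmeas _ (measurableSet_singleton j)),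
      probReal_univ, ← hunif (t, m) j]
    rfl
  rw [Finset.prod_congr rfl fun m hm ↦ by rw [if_neg (Finset.ne_of_mem_erase hm), hcompl],
    Finset.prod_const, Finset.card_erase_of_mem (Finset.mem_univ n), Finset.card_univ, if_pos rfl,
    ← measureReal_def]
  exact congrArg (· * _) (hunif (t, n) j)

end

lemma measureReal_few_collision_free_visits_le [IsProbabilityMeasure μ] {N M T : ℕ} (hNM : N ≤ M)
    {a : Fin T × Fin N → Ω → Fin M} (hmeas : ∀ q, Measurable (a q))
    (hunif : ∀ q j, μ.real {ω | a q ω = j} = (M : ℝ)⁻¹) (hindep : iIndepFun a μ)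
    (n : Fin N) (i : Fin M) :
    μ.real {ω | (#{t | a (t, n) ω = i ∧ ∀ m, m ≠ n → a (t, m) ω ≠ i} : ℝ) < T / (5 * M)}
      ≤ exp (-T / (18 * M ^ 2)) := by
  set p := (M : ℝ)⁻¹ * (1 - (M : ℝ)⁻¹) ^ (N - 1)
  have hS m : MeasurableSet (if m = n then {i} else ({i}ᶜ : Set (Fin M))) := by
    split_ifs <;> simp
  have hA t : MeasurableSet {ω | a (t, n) ω = i ∧ ∀ m, m ≠ n → a (t, m) ω ≠ i} := by
    rw [Set.setOf_eq_and_forall_ne_eq_iInter (fun m ↦ a (t, m))]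
    exact .iInter fun m ↦ hmeas _ (hS m)
  have hindepA : iIndepSet (fun t ↦ {ω | a (t, n) ω = i ∧ ∀ m, m ≠ n → a (t, m) ω ≠ i}) μ := by
    convert hindep.iIndepSet_iInter_preimage hmeas hS with t
    exact Set.setOf_eq_and_forall_ne_eq_iInter (fun m ↦ a (t, m)) n i
  have hp t : μ.real {ω | a (t, n) ω = i ∧ ∀ m, m ≠ n → a (t, m) ω ≠ i} = p := by
    simpa using measureReal_eq_and_forall_ne hindep hmeas hunif t n i
  have hp_ge : 11 / 30 * (M : ℝ)⁻¹ ≤ p := eleven_div_thirty_mul_inv_le_inv_mul_one_sub_inv_pow hNM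
  have hthreshold : (T : ℝ) / (5 * M) ≤ (p - (6 * M : ℝ)⁻¹) * T := by
    rw [div_eq_inv_mul]
    gcongr
    rw [mul_inv, mul_inv]
    linarith
  calc _ ≤ μ.real {ω | (#{t | a (t, n) ω = i ∧ ∀ m, m ≠ n → a (t, m) ω ≠ i} : ℝ)
          ≤ (p - (6 * M : ℝ)⁻¹) * Fintype.card (Fin T)} := by
        refine measureReal_mono fun ω hω ↦ ?_
        simp only [Set.mem_ofPred_eq, Fintype.card_fin] at hω ⊢
        exact hω.le.trans hthreshold
    _ ≤ exp (-2 * (6 * M : ℝ)⁻¹ ^ 2 * Fintype.card (Fin T)) :=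
        measureReal_card_filter_le_le_exp hA hindepA hp (by positivity)
    _ = exp (-T / (18 * M ^ 2)) := by
        rw [Fintype.card_fin]
        congr 1
        field_simp
        ring

end

theorem prob_few_collision_free_visits_general {Ω : Type*} [MeasurableSpace Ω] (P : Measure Ω)
    [IsProbabilityMeasure P]
    (N M T : ℕ) (hNM : N ≤ M)
    (a : Fin T × Fin N → Ω → Fin M)
    (hmeas : ∀ q, Measurable (a q))
    (hunif : ∀ q (j : Fin M), P {ω | a q ω = j} = (M : ENNReal)⁻¹)
    (hindep : iIndepFun a P) :
    P {ω | ∃ (n : Fin N) (i : Fin M),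
        (((Finset.univ.filter (fun t : Fin T =>
            a (t, n) ω = i ∧ ∀ m, m ≠ n → a (t, m) ω ≠ i)).card : ℝ)
          < (T : ℝ) / (5 * M))}
      ≤ ENNReal.ofReal ((N : ℝ) * M * Real.exp (-(T : ℝ) / (18 * M ^ 2))) := by
  have hunif' q j : P.real {ω | a q ω = j} = (M : ℝ)⁻¹ := by
    simp [measureReal_def, hunif]
  rw [ENNReal.le_ofReal_iff_toReal_le (measure_ne_top _ _) (by positivity), ← measureReal_def]
  calc _ = P.real (⋃ n : Fin N, ⋃ i : Fin M, {ω | (#{t | a (t, n) ω = i ∧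
          ∀ m, m ≠ n → a (t, m) ω ≠ i} : ℝ) < T / (5 * M)}) := by
        simp only [Set.ofPred_exists]
    _ ≤ ∑ n : Fin N, ∑ i : Fin M, P.real {ω | (#{t | a (t, n) ω = i ∧
          ∀ m, m ≠ n → a (t, m) ω ≠ i} : ℝ) < T / (5 * M)} :=
        (measureReal_iUnion_fintype_le _).trans
          (Finset.sum_le_sum fun n _ ↦ measureReal_iUnion_fintype_le _)
    _ ≤ ∑ _n : Fin N, ∑ _i : Fin M, exp (-T / (18 * M ^ 2)) := by
        gcongr with n _ i _
        exact measureReal_few_collision_free_visits_le hNM hmeas hunif' hindep n i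
    _ = N * M * exp (-T / (18 * M ^ 2)) := by
        simp [mul_assoc]

/-- With `N ≤ M` players choosing arms independently and uniformly at random
among `M` arms in each of `T` rounds (independently across players and rounds), the number
`V_{n,i}` of collision-free visits of player `n` to arm `i` satisfies
`P(min_{n,i} V_{n,i} < T/(5M)) ≤ N·M·exp(-T/(18M²))`. -/
theorem prob_few_collision_free_visits {Ω : Type*} [MeasurableSpace Ω] (P : Measure Ω)
    [IsProbabilityMeasure P]
    (N M T : ℕ) (hN : 0 < N) (hNM : N ≤ M) (hT : 0 < T)
    (a : Fin T × Fin N → Ω → Fin M)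
    (hmeas : ∀ q, Measurable (a q))
    (hunif : ∀ q (j : Fin M), P {ω | a q ω = j} = (M : ENNReal)⁻¹)
    (hindep : iIndepFun a P) :
    P {ω | ∃ (n : Fin N) (i : Fin M),
        (((Finset.univ.filter (fun t : Fin T =>
            a (t, n) ω = i ∧ ∀ m, m ≠ n → a (t, m) ω ≠ i)).card : ℝ)
          < (T : ℝ) / (5 * M))}
      ≤ ENNReal.ofReal ((N : ℝ) * M * Real.exp (-(T : ℝ) / (18 * M ^ 2))) :=
  prob_few_collision_free_visits_general P N M T hNM a hmeas hunif hindep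
end

section
/- Let N ≤ M be positive integers. For each player n ∈ {1,...,N} let E_n ⊆ {1,...,M} be a nonempty set of allowed arms, and suppose there exists an injective map 𝓜 : {1,...,N} → {1,...,M} with 𝓜(n) ∈ E_n for all n (a matching saturating the players). Let a : {1,...,N} → {1,...,M} be a strategy profile with a(n) ∈ E_n for all n that is not injective. Define a player n to be colliding in a if there exists m ≠ n with a(m) = a(n), and define Φ_𝓜(a) = |{ n : a(n) = 𝓜(n) }|. Then the profile a' defined by a'(n) = 𝓜(n) if n is colliding in a and a'(n) = a(n) otherwise satisfies: a'(n) ∈ E_n for every n, a'(n) = a(n) for every non-colliding player n, and Φ_𝓜(a') ≥ Φ_𝓜(a) + 1. -/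
/-- If the allowed-arm sets `E n` admit a player-saturating matching `𝓜`,
`a` is a non-injective profile with `a n ∈ E n` for all `n`, and `a'` is obtained from `a`
by sending every colliding player to her matched arm `𝓜 n` (others keep their arm), then
`a'` is a valid profile agreeing with `a` on non-colliding players, and the number of
players playing their matched arm increases by at least one. -/
theorem colliding_to_matched_increases_potential (N M : ℕ) (hN : 0 < N) (hNM : N ≤ M)
    (E : Fin N → Finset (Fin M)) (hE : ∀ n, (E n).Nonempty)
    (𝓜 : Fin N → Fin M) (h𝓜inj : Function.Injective 𝓜) (h𝓜mem : ∀ n, 𝓜 n ∈ E n)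
    (a : Fin N → Fin M) (ha : ∀ n, a n ∈ E n) (hna : ¬ Function.Injective a)
    (a' : Fin N → Fin M)
    (ha' : ∀ n, a' n = if ∃ m, m ≠ n ∧ a m = a n then 𝓜 n else a n) :
    (∀ n, a' n ∈ E n) ∧
    (∀ n, ¬ (∃ m, m ≠ n ∧ a m = a n) → a' n = a n) ∧
    (Finset.univ.filter (fun n => a n = 𝓜 n)).card + 1
      ≤ (Finset.univ.filter (fun n => a' n = 𝓜 n)).card := by

  refine ⟨?_, ?_, ?_⟩
  · intro n
    rw [ha' n]
    split <;> [exact h𝓜mem n; exact ha n]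
  · intro n hn
    rw [ha' n, if_neg hn]
  · -- find a witness w colliding with a w ≠ 𝓜 w
    rw [Function.not_injective_iff] at hna
    obtain ⟨x, y, hxy, hne⟩ := hna
    have hwit : ∃ w, a w ≠ 𝓜 w ∧ ∃ m, m ≠ w ∧ a m = a w := by
      by_cases hx : a x = 𝓜 x
      · refine ⟨y, ?_, x, hne, hxy⟩
        intro hy
        exact hne (h𝓜inj (hx ▸ hy ▸ hxy))
      · exact ⟨x, hx, y, fun h => hne h.symm, hxy.symm⟩
    obtain ⟨w, hw1, hw2⟩ := hwit
    have hsub : Finset.univ.filter (fun n => a n = 𝓜 n) ⊂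
        Finset.univ.filter (fun n => a' n = 𝓜 n) := by
      constructor
      · intro n hn
        simp only [Finset.mem_filter, Finset.mem_univ, true_and] at hn ⊢
        rw [ha' n]
        split <;> simp [hn]
      · intro hsub
        have := hsub (by simp only [Finset.mem_filter, Finset.mem_univ, true_and]
                         rw [ha' w, if_pos hw2] : w ∈ _)
        simp only [Finset.mem_filter, Finset.mem_univ, true_and] at this
        exact hw1 this
    exact Finset.card_lt_card hsub
end

section
/- Let N ≤ M be positive integers, let E_n ⊆ {1,...,M} be nonempty allowed arm sets for n ∈ {1,...,N}, and suppose there exists an injective map 𝓜 : {1,...,N} → {1,...,M} with 𝓜(n) ∈ E_n for all n. Call a profile b a valid one-step successor of profile a if: b(n) ∈ E_n for all n; and b(n) = a(n) for every player n that is non-colliding in a (i.e., no m ≠ n has a(m) = a(n)). Then for every profile a with a(n) ∈ E_n for all n, there exists a finite sequence a = a^0, a^1, ..., a^k with k ≤ N such that each a^{t+1} is a valid one-step successor of a^t and a^k is injective. -/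
/-!
Let every colliding player jump to her arm in the matching `𝓜`, while non-colliding players stay.
A player sitting on her `𝓜`-arm stays there: either she is non-colliding, or she jumps to it
again. As long as the profile is not injective, some colliding player is not yet on her
`𝓜`-arm (two players on the same arm cannot both be, `𝓜` being injective), so the set of
players on their `𝓜`-arms strictly grows. Hence after `N` steps either the profile has become
injective earlier (and injective profiles are fixed) or every player sits on her `𝓜`-arm,
i.e. the profile is `𝓜` itself.
-/

namespace CollisionResolution

variable {ι α : Type*}

def IsColliding (b : ι → α) (i : ι) : Prop :=
  ∃ j, j ≠ i ∧ b j = b i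

open Classical in
noncomputable def resolveCollisions (μ : ι → α) (b : ι → α) : ι → α :=
  fun i => if IsColliding b i then μ i else b i

open Classical in
noncomputable def onTarget [Fintype ι] (μ b : ι → α) : Finset ι :=
  Finset.univ.filter fun i => b i = μ i

variable {μ b : ι → α}

theorem not_isColliding_of_injective (hb : Function.Injective b) (i : ι) :
    ¬ IsColliding b i :=
  fun ⟨_, hji, hbj⟩ => hji (hb hbj)

theorem resolveCollisions_of_isColliding {i : ι} (h : IsColliding b i) :
    resolveCollisions μ b i = μ i :=
  if_pos h

theorem resolveCollisions_of_not_isColliding {i : ι} (h : ¬ IsColliding b i) :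
    resolveCollisions μ b i = b i :=
  if_neg h

theorem resolveCollisions_eq_self (hb : Function.Injective b) : resolveCollisions μ b = b :=
  funext fun i => resolveCollisions_of_not_isColliding (not_isColliding_of_injective hb i)

theorem resolveCollisions_mem {E : ι → Set α} (hμ : ∀ i, μ i ∈ E i) (hb : ∀ i, b i ∈ E i)
    (i : ι) : resolveCollisions μ b i ∈ E i := by
  by_cases h : IsColliding b i
  · rw [resolveCollisions_of_isColliding h]; exact hμ i
  · rw [resolveCollisions_of_not_isColliding h]; exact hb i

theorem iterate_resolveCollisions_mem {E : ι → Set α} (hμ : ∀ i, μ i ∈ E i)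
    (hb : ∀ i, b i ∈ E i) (t : ℕ) (i : ι) : (resolveCollisions μ)^[t] b i ∈ E i := by
  induction t generalizing b with
  | zero => exact hb i
  | succ t ih => exact ih (resolveCollisions_mem hμ hb)

theorem exists_isColliding_ne (hμ : Function.Injective μ) (hb : ¬ Function.Injective b) :
    ∃ i, IsColliding b i ∧ b i ≠ μ i := by
  obtain ⟨i, j, hbij, hij⟩ := Function.not_injective_iff.mp hb
  by_cases hi : b i = μ i
  · refine ⟨j, ⟨i, hij, hbij⟩, fun hj => hij (hμ ?_)⟩
    rw [← hi, hbij, hj]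
  · exact ⟨i, ⟨j, hij.symm, hbij.symm⟩, hi⟩

section Fintype

variable [Fintype ι]

theorem mem_onTarget {i : ι} : i ∈ onTarget μ b ↔ b i = μ i := by
  simp [onTarget]

theorem onTarget_subset_resolveCollisions : onTarget μ b ⊆ onTarget μ (resolveCollisions μ b) := by
  intro i hi
  rw [mem_onTarget] at hi ⊢
  by_cases h : IsColliding b i
  · exact resolveCollisions_of_isColliding h
  · rw [resolveCollisions_of_not_isColliding h, hi]

theorem card_onTarget_lt_resolveCollisions (hμ : Function.Injective μ)
    (hb : ¬ Function.Injective b) :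
    (onTarget μ b).card < (onTarget μ (resolveCollisions μ b)).card := by
  obtain ⟨i, hcol, hne⟩ := exists_isColliding_ne hμ hb
  refine Finset.card_lt_card ⟨onTarget_subset_resolveCollisions, fun hsub => ?_⟩
  have hi : i ∈ onTarget μ (resolveCollisions μ b) :=
    mem_onTarget.mpr (resolveCollisions_of_isColliding hcol)
  exact hne (mem_onTarget.mp (hsub hi))

theorem injective_or_le_card_onTarget_iterate (hμ : Function.Injective μ) (t : ℕ) :
    Function.Injective ((resolveCollisions μ)^[t] b) ∨
      t ≤ (onTarget μ ((resolveCollisions μ)^[t] b)).card := by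
  induction t with
  | zero => exact Or.inr (Nat.zero_le _)
  | succ t ih =>
    rw [Function.iterate_succ_apply']
    by_cases hinj : Function.Injective ((resolveCollisions μ)^[t] b)
    · left
      rwa [resolveCollisions_eq_self hinj]
    · exact Or.inr ((ih.resolve_left hinj).trans_lt
        (card_onTarget_lt_resolveCollisions hμ hinj))

theorem eq_of_card_onTarget (h : (onTarget μ b).card = Fintype.card ι) : b = μ :=
  funext fun i => mem_onTarget.mp (Finset.eq_univ_of_card _ h ▸ Finset.mem_univ i)

theorem injective_iterate_card_resolveCollisions (hμ : Function.Injective μ) :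
    Function.Injective ((resolveCollisions μ)^[Fintype.card ι] b) := by
  refine (injective_or_le_card_onTarget_iterate hμ _).elim id fun h => ?_
  rw [eq_of_card_onTarget (le_antisymm (Finset.card_le_univ _) h)]
  exact hμ

end Fintype

end CollisionResolution

open CollisionResolution in
theorem exists_path_to_matching_general (N M : ℕ)
    (E : Fin N → Finset (Fin M))
    (𝓜 : Fin N → Fin M) (h𝓜inj : Function.Injective 𝓜) (h𝓜mem : ∀ n, 𝓜 n ∈ E n)
    (a : Fin N → Fin M) (ha : ∀ n, a n ∈ E n) :
    ∃ k ≤ N, ∃ seq : ℕ → (Fin N → Fin M),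
      seq 0 = a ∧
      (∀ t < k,
        (∀ n, seq (t + 1) n ∈ E n) ∧
        (∀ n, ¬ (∃ m, m ≠ n ∧ seq t m = seq t n) → seq (t + 1) n = seq t n)) ∧
      Function.Injective (seq k) := by
  refine ⟨N, le_rfl, fun t => (resolveCollisions 𝓜)^[t] a, rfl, fun t _ => ⟨?_, ?_⟩, ?_⟩
  · exact iterate_resolveCollisions_mem (E := fun n => (E n : Set (Fin M))) h𝓜mem ha (t + 1)
  · exact fun n hn => (congrFun (Function.iterate_succ_apply' _ t a) n).trans
      (resolveCollisions_of_not_isColliding hn)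
  · simpa using injective_iterate_card_resolveCollisions (b := a) h𝓜inj

/-- If the allowed-arm sets `E n` admit a player-saturating matching, then
from every valid profile `a` there is a sequence of at most `N` valid one-step transitions
(in which every non-colliding player keeps her arm and all players stay within their
allowed sets) ending in an injective profile (a matching). -/
theorem exists_path_to_matching (N M : ℕ) (hN : 0 < N) (hNM : N ≤ M)
    (E : Fin N → Finset (Fin M)) (hE : ∀ n, (E n).Nonempty)
    (𝓜 : Fin N → Fin M) (h𝓜inj : Function.Injective 𝓜) (h𝓜mem : ∀ n, 𝓜 n ∈ E n)
    (a : Fin N → Fin M) (ha : ∀ n, a n ∈ E n) :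
    ∃ k ≤ N, ∃ seq : ℕ → (Fin N → Fin M),
      seq 0 = a ∧
      (∀ t < k,
        (∀ n, seq (t + 1) n ∈ E n) ∧
        (∀ n, ¬ (∃ m, m ≠ n ∧ seq t m = seq t n) → seq (t + 1) n = seq t n)) ∧
      Function.Injective (seq k) :=
  exists_path_to_matching_general N M E 𝓜 h𝓜inj h𝓜mem a ha
end

section
/- Let (k_w)_{w ≥ 0} be a strictly increasing sequence of positive integers (reset epochs) satisfying k_{w+1} = k_w + ⌈k_w / 3⌉ for all w, with k_0 = 1. Then for every integer k > 9 there exists an index w such that ⌈k/2⌉ ≤ k_w, k_{w+1} ≤ k, and k_{w+1} - k_w ≥ k/6. -/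
/-- Upper bound on the ceiling: `3 * ⌈n/3⌉ ≤ n + 2`. -/
lemma ceil3_le (n : ℕ) : 3 * ⌈(n : ℝ) / 3⌉₊ ≤ n + 2 := by
  have h : (⌈(n : ℝ) / 3⌉₊ : ℝ) < (n : ℝ) / 3 + 1 :=
    Nat.ceil_lt_add_one (by positivity)
  have h' : (3 * ⌈(n : ℝ) / 3⌉₊ : ℝ) < (n : ℝ) + 3 := by linarith
  have := (by exact_mod_cast h' : 3 * ⌈(n : ℝ) / 3⌉₊ < n + 3)
  omega

/-- For the reset-epoch sequence `k_0 = 1`, `k_{w+1} = k_w + ⌈k_w/3⌉`,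
for every `k > 9` there is a full reset-to-reset period `[k_w, k_{w+1}] ⊆ [⌈k/2⌉, k]`
of length at least `k/6`. -/
theorem reset_period_in_window (kseq : ℕ → ℕ) (h0 : kseq 0 = 1)
    (hmono : StrictMono kseq)
    (hrec : ∀ w, kseq (w + 1) = kseq w + ⌈(kseq w : ℝ) / 3⌉₊) :
    ∀ k : ℕ, 9 < k → ∃ w,
      ⌈(k : ℝ) / 2⌉₊ ≤ kseq w ∧ kseq (w + 1) ≤ k ∧
      (k : ℝ) / 6 ≤ (kseq (w + 1) : ℝ) - (kseq w : ℝ) := by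
  intro k hk
  set P : ℕ → Prop := fun w => kseq (w + 1) ≤ k with hPdef
  have hP0 : P 0 := by
    have h1 : kseq 1 = 2 := by
      have h13 : ⌈(1 : ℝ) / 3⌉₊ = 1 := by
        rw [Nat.ceil_eq_iff one_ne_zero]; norm_num
      have := hrec 0
      rw [h0] at this
      rw [this]
      norm_num [h13]
    simp only [hPdef, h1]
    omega
  set w := Nat.findGreatest P k with hw
  have hPw : P w := Nat.findGreatest_spec (Nat.zero_le k) hP0
  have hwk : w ≤ k := Nat.findGreatest_le k
  have hnot : k < kseq (w + 2) := by
    by_cases h : w + 1 ≤ k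
    · have := Nat.findGreatest_is_greatest (Nat.lt_succ_self w) h
      simpa [hPdef] using Nat.lt_of_not_le this
    · exfalso
      have hwe : w = k := by omega
      have : w + 1 ≤ kseq (w + 1) := hmono.le_apply
      simp only [hPdef] at hPw
      omega
  refine ⟨w, ?_, hPw, ?_⟩
  all_goals {
    set A := kseq w with hA
    set B := kseq (w + 1) with hB
    have hrec1 : B = A + ⌈(A : ℝ) / 3⌉₊ := hrec w
    have hrec2 : kseq (w + 2) = B + ⌈(B : ℝ) / 3⌉₊ := hrec (w + 1)
    have hc1 : 3 * ⌈(A : ℝ) / 3⌉₊ ≤ A + 2 := ceil3_le A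
    have hc2 : 3 * ⌈(B : ℝ) / 3⌉₊ ≤ B + 2 := ceil3_le B
    have hk2 : k + 1 ≤ B + ⌈(B : ℝ) / 3⌉₊ := by omega
    have hBk : 3 * k + 1 ≤ 4 * B := by omega
    have hAk : 9 * k ≤ 16 * A + 5 := by omega
    have h8k : 8 * k ≤ 16 * A := by omega
    first
    | · rw [Nat.ceil_le]
        have : (8 * k : ℝ) ≤ 16 * A := by exact_mod_cast h8k
        linarith
    | · have hle : ((A : ℝ)) / 3 ≤ (⌈(A : ℝ) / 3⌉₊ : ℝ) := Nat.le_ceil _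
        have hBr : (B : ℝ) = (A : ℝ) + (⌈(A : ℝ) / 3⌉₊ : ℝ) := by
          exact_mod_cast hrec1
        have : (8 * k : ℝ) ≤ 16 * A := by exact_mod_cast h8k
        linarith
  }
end
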